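/- Let n ≥ 3 with n ≡ 5, 8, or 11 (mod 12), and define the integer sequence a_1 = n-1, a_2 = n(n-2), a_{i+2} = (2n-1)a_{i+1} - (n^2-n+1)a_i. Then gcd(n^n, a_n) = n^2. -/
import Mathlib

/-- components of `(N - ω)^i = p + q·ω` in `ℤ[ω]`, `ω² = ω - 1`. -/
def pqX (N : ℤ) : ℕ → ℤ × ℤ
  | 0 => (1, 0)
  | i+1 => ((pqX N i).1 * N + (pqX N i).2, -(pqX N i).1 + (N-1) * (pqX N i).2)

/-- component of `ω^i` -/
def UX (i : ℕ) : ℤ :=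
  match i % 6 with | 0 => 1 | 1 => 0 | 2 => -1 | 3 => -1 | 4 => 0 | _ => 1

def VX (i : ℕ) : ℤ :=
  match i % 6 with | 0 => 0 | 1 => 1 | 2 => 1 | 3 => 0 | 4 => -1 | _ => -1

lemma UVX_succ (i : ℕ) : UX (i+1) = -VX i ∧ VX (i+1) = UX i + VX i := by
  have h : i % 6 = 0 ∨ i % 6 = 1 ∨ i % 6 = 2 ∨ i % 6 = 3 ∨ i % 6 = 4 ∨ i % 6 = 5 := by omega
  rcases h with h | h | h | h | h | h <;>
    · have h' : (i+1) % 6 = (i % 6 + 1) % 6 := by omega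
      rw [h] at h'
      simp [UX, VX, h, h']

def AAX (N : ℤ) (i : ℕ) : ℤ := 1 - i * N + (i.choose 3) * N^3
def BBX (N : ℤ) (i : ℕ) : ℤ := i * N - (i.choose 2) * N^2
def FFX (N : ℤ) (i : ℕ) : ℤ := (-1)^i * (UX i * AAX N i - VX i * BBX N i)
def GGX (N : ℤ) (i : ℕ) : ℤ :=
  (-1)^i * (UX i * BBX N i + VX i * AAX N i + VX i * BBX N i)

lemma keyB (N : ℤ) (i : ℕ) :
    ∃ t u : ℤ, (pqX N i).1 = FFX N i + N^4 * t ∧ (pqX N i).2 = GGX N i + N^4 * u := by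
  induction i with
  | zero =>
      refine ⟨0, 0, ?_, ?_⟩ <;> simp [pqX, FFX, GGX, AAX, BBX, UX, VX]
  | succ i ih =>
      obtain ⟨t, u, hp, hq⟩ := ih
      obtain ⟨hU, hV⟩ := UVX_succ i
      refine ⟨N * t + u + (-1)^i * UX i * (i.choose 3),
              -t + (N-1) * u + (-1)^i * VX i * (i.choose 3), ?_, ?_⟩ <;>
      · show _ = _
        simp only [pqX, FFX, GGX, AAX, BBX, hU, hV, hp, hq, pow_succ,
          Nat.choose_succ_succ, Nat.choose_one_right]
        push_cast
        ring

theorem stmtX (n : ℕ) (hn : 3 ≤ n) (a : ℕ → ℤ)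
    (h1 : a 1 = n - 1) (h2 : a 2 = n * (n - 2))
    (hrec : ∀ i : ℕ, 1 ≤ i →
      a (i + 2) = (2 * n - 1) * a (i + 1) - (n ^ 2 - n + 1) * a i) :
    (n % 12 = 5 ∨ n % 12 = 8 ∨ n % 12 = 11) →
    Int.gcd ((n : ℤ) ^ n) (a n) = n ^ 2 := by
  intro hmod
  set N : ℤ := (n : ℤ) with hN
  -- the sequence matches p + q
  have hs : ∀ i : ℕ, (pqX N (i+2)).1 + (pqX N (i+2)).2 =
      (2*N - 1) * ((pqX N (i+1)).1 + (pqX N (i+1)).2)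
        - (N^2 - N + 1) * ((pqX N i).1 + (pqX N i).2) := by
    intro i
    simp only [pqX]
    ring
  have hA : ∀ i : ℕ, a (i+1) = (pqX N (i+1)).1 + (pqX N (i+1)).2
      ∧ a (i+2) = (pqX N (i+2)).1 + (pqX N (i+2)).2 := by
    intro i
    induction i with
    | zero =>
        constructor
        · simp [pqX, h1]; ring
        · simp [pqX, h2]; ring
    | succ i ih =>
        refine ⟨ih.2, ?_⟩
        have := hrec (i+1) (by omega)
        rw [this, ih.1, ih.2, hs (i+1)]
  have han : a n = (pqX N n).1 + (pqX N n).2 := by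
    obtain ⟨m, hm⟩ : ∃ m, n = m + 1 := ⟨n - 1, by omega⟩
    rw [hm]; exact (hA m).1
  obtain ⟨t, u, hp, hq⟩ := keyB N n
  set c2 : ℤ := (n.choose 2 : ℤ) with hc2
  -- a n = N^2 * w
  have haw : a n = N^2 * (c2 - 1 + N^2 * (t + u)) := by
    have h6 : n % 6 = 5 ∨ n % 6 = 2 := by omega
    rcases h6 with h6 | h6
    · have hodd : Odd n := Nat.odd_iff.mpr (by omega)
      have hE : (-1 : ℤ)^n = -1 := hodd.neg_one_pow
      rw [han, hp, hq]
      simp only [FFX, GGX, AAX, BBX, UX, VX, h6, hE]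
      push_cast
      ring
    · have heven : Even n := Nat.even_iff.mpr (by omega)
      have hE : (-1 : ℤ)^n = 1 := heven.neg_one_pow
      rw [han, hp, hq]
      simp only [FFX, GGX, AAX, BBX, UX, VX, h6, hE]
      push_cast
      ring
  -- 2 * c2 = N * (N-1)
  have h2c2 : 2 * c2 = N * (N - 1) := by
    have he : 2 * (n.choose 2) = n * (n - 1) := by
      rw [Nat.choose_two_right]
      have : Even (n * (n-1)) := by
        have := Nat.even_mul_succ_self (n-1)
        rwa [Nat.sub_add_cancel (by omega), Nat.mul_comm] at this
      obtain ⟨k, hk⟩ := this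
      omega
    have := congrArg (fun x : ℕ => (x : ℤ)) he
    push_cast at this
    rw [hc2, this]
    have : ((n : ℤ) - 1) = ((n - 1 : ℕ) : ℤ) := by
      push_cast [Nat.cast_sub (by omega : 1 ≤ n)]; ring
    rw [this]
  -- N divides c2^2
  obtain ⟨s, hsq⟩ : ∃ s : ℤ, c2^2 = N * s := by
    rcases (by omega : n % 2 = 1 ∨ n % 4 = 0) with hpar | hpar
    · obtain ⟨l, hl⟩ : ∃ l, n = 2*l+1 := ⟨n/2, by omega⟩
      have hNl : N = 2*(l:ℤ)+1 := by rw [hN, hl]; push_cast; ring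
      have : c2 = N * l := by
        have h2 : 2 * c2 = 2 * (N * l) := by rw [h2c2, hNl]; ring
        exact mul_left_cancel₀ two_ne_zero h2
      exact ⟨l * c2, by rw [this]; ring⟩
    · obtain ⟨m, hm⟩ : ∃ m, n = 4*m := ⟨n/4, by omega⟩
      have hNm : N = 4*(m:ℤ) := by rw [hN, hm]; push_cast; ring
      have : c2 = 2*(m:ℤ)*(N-1) := by
        have h2 : 2 * c2 = 2 * (2*(m:ℤ)*(N-1)) := by rw [h2c2, hNm]; ring
        exact mul_left_cancel₀ two_ne_zero h2
      exact ⟨(m:ℤ) * (N-1)^2, by rw [this, hNm]; ring⟩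
  set w : ℤ := c2 - 1 + N^2 * (t + u) with hw
  have hcop : IsCoprime N w := by
    refine ⟨s + N*(t+u)*(c2+1), -(c2+1), ?_⟩
    rw [hw]
    linear_combination -hsq
  have hNn : N^n = N^2 * N^(n-2) := by
    rw [← pow_add]; congr 1; omega
  rw [haw, hNn, Int.gcd_mul_left,
    Int.isCoprime_iff_gcd_eq_one.mp (hcop.pow_left), mul_one]
  simp [hN, Int.natAbs_pow]
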